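/- Let 𝒜 be a compact IRU-set of strictly positive N×N matrices. If à ∈ 𝒜 attains the minimum spectral radius ρ(Ã) = min_{A∈𝒜} ρ(A), and ṽ > 0 is a Perron eigenvector of à with Ãṽ = ρ(Ã)ṽ, then Aṽ ≥ ρ(Ã)ṽ componentwise for every A ∈ 𝒜. -/

import Mathlib

open Matrix Polynomial

/-- Spectral radius of a real square matrix: the maximum modulus of its
(complex) eigenvalues, i.e. of the roots of the characteristic polynomial of
its complexification. -/
noncomputable def specRad {N : ℕ} (A : Matrix (Fin N) (Fin N) ℝ) : ℝ :=
  sSup {r : ℝ | ∃ μ : ℂ, (A.map Complex.ofReal).charpoly.IsRoot μ ∧ r = ‖μ‖}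

/-- An independent row uncertainty (IRU) set of matrices: the set of all
matrices whose `i`-th row belongs to a prescribed set of rows `rows i`. -/
def IsIRU {N M : ℕ} (S : Set (Matrix (Fin N) (Fin M) ℝ)) : Prop :=
  ∃ rows : Fin N → Set (Fin M → ℝ), S = {A | ∀ i, A i ∈ rows i}

/-!
Suppose `(A ṽ)ᵢ < ρ ṽᵢ` for some `A ∈ 𝒜`. Replacing the `i`-th row of `Ã` by that of `A` gives,
by the IRU property, a matrix `B ∈ 𝒜` with `B ṽ ≤ ρ ṽ` and strict inequality in row `i`.
As `B` is positive, `B² ṽ < ρ² ṽ` in every row, so by the Collatz–Wielandt bound every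
eigenvalue `μ` of `B` has `|μ|² < ρ²`. Hence `ρ(B) < ρ`, contradicting the minimality of `ρ = ρ(Ã)`.
-/

namespace Matrix

variable {n : Type*} [Fintype n]

theorem exists_mulVec_eq_smul_of_isRoot_charpoly [DecidableEq n] {K : Type*} [Field K]
    {A : Matrix n n K} {μ : K} (h : A.charpoly.IsRoot μ) : ∃ x ≠ 0, A *ᵥ x = μ • x := by
  have hμ : Module.End.HasEigenvalue (toLin' A) μ := by
    rwa [Module.End.hasEigenvalue_iff_isRoot_charpoly, charpoly_toLin']
  obtain ⟨x, hx⟩ := hμ.exists_hasEigenvector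
  exact ⟨x, hx.2, by simpa using hx.apply_eq_smul⟩

/-- Collatz–Wielandt bound for the complex eigenvalues of a nonnegative matrix. -/
theorem exists_norm_mul_le_mulVec {M : Matrix n n ℝ} (hM : ∀ i j, 0 ≤ M i j) {v : n → ℝ}
    (hv : ∀ i, 0 < v i) {μ : ℂ} {x : n → ℂ} (hx : x ≠ 0)
    (hμ : M.map Complex.ofReal *ᵥ x = μ • x) : ∃ j, ‖μ‖ * v j ≤ (M *ᵥ v) j := by
  obtain ⟨k, hk⟩ := Function.ne_iff.1 hx
  obtain ⟨j, -, hj⟩ :=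
    Finset.exists_max_image Finset.univ (fun j => ‖x j‖ / v j) ⟨k, Finset.mem_univ k⟩
  set t := ‖x j‖ / v j with ht_def
  have ht : 0 < t := (div_pos (norm_pos_iff.2 hk) (hv k)).trans_le (hj k (Finset.mem_univ k))
  have hxt : ∀ l, ‖x l‖ ≤ t * v l := fun l => (div_le_iff₀ (hv l)).1 (hj l (Finset.mem_univ l))
  refine ⟨j, le_of_mul_le_mul_left ?_ ht⟩
  calc t * (‖μ‖ * v j) = ‖(μ • x) j‖ := by
        rw [Pi.smul_apply, smul_eq_mul, norm_mul, ht_def, mul_left_comm,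
          div_mul_cancel₀ _ (hv j).ne']
    _ = ‖∑ l, (M j l : ℂ) * x l‖ := by rw [← hμ]; rfl
    _ ≤ ∑ l, M j l * ‖x l‖ := by
        refine (norm_sum_le _ _).trans_eq (Finset.sum_congr rfl fun l _ => ?_)
        rw [norm_mul, Complex.norm_real, Real.norm_of_nonneg (hM j l)]
    _ ≤ ∑ l, M j l * (t * v l) :=
        Finset.sum_le_sum fun l _ => mul_le_mul_of_nonneg_left (hxt l) (hM j l)
    _ = t * (M *ᵥ v) j := by
        simp only [mulVec, dotProduct, Finset.mul_sum, mul_left_comm]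

theorem norm_lt_of_mulVec_lt {M : Matrix n n ℝ} (hM : ∀ i j, 0 ≤ M i j) {v : n → ℝ}
    (hv : ∀ i, 0 < v i) {c : ℝ} (hc : ∀ j, (M *ᵥ v) j < c * v j) {μ : ℂ} {x : n → ℂ}
    (hx : x ≠ 0) (hμ : M.map Complex.ofReal *ᵥ x = μ • x) : ‖μ‖ < c := by
  obtain ⟨j, hj⟩ := exists_norm_mul_le_mulVec hM hv hx hμ
  exact lt_of_mul_lt_mul_right (hj.trans_lt (hc j)) (hv j).le

theorem mulVec_mulVec_lt_of_mulVec_le {B : Matrix n n ℝ} (hB : ∀ i j, 0 < B i j) {v : n → ℝ}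
    {ρ : ℝ} (hρ : 0 ≤ ρ) (hle : ∀ j, (B *ᵥ v) j ≤ ρ * v j) {i : n}
    (hlt : (B *ᵥ v) i < ρ * v i) (j : n) : (B *ᵥ B *ᵥ v) j < ρ ^ 2 * v j :=
  calc (B *ᵥ B *ᵥ v) j = ∑ k, B j k * (B *ᵥ v) k := rfl
    _ < ∑ k, B j k * (ρ * v k) :=
        Finset.sum_lt_sum (fun k _ => mul_le_mul_of_nonneg_left (hle k) (hB j k).le)
          ⟨i, Finset.mem_univ i, mul_lt_mul_of_pos_left hlt (hB j i)⟩
    _ = ρ * (B *ᵥ v) j := by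
        simp only [mulVec, dotProduct, Finset.mul_sum, mul_left_comm]
    _ ≤ ρ * (ρ * v j) := mul_le_mul_of_nonneg_left (hle j) hρ
    _ = ρ ^ 2 * v j := by ring

end Matrix

theorem specRad_nonneg {N : ℕ} (A : Matrix (Fin N) (Fin N) ℝ) : 0 ≤ specRad A :=
  Real.sSup_nonneg (by rintro _ ⟨μ, -, rfl⟩; exact norm_nonneg μ)

theorem exists_isRoot_specRad_eq_norm {N : ℕ} (hN : 0 < N) (A : Matrix (Fin N) (Fin N) ℝ) :
    ∃ μ : ℂ, (A.map Complex.ofReal).charpoly.IsRoot μ ∧ specRad A = ‖μ‖ := by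
  set p := (A.map Complex.ofReal).charpoly
  have hp : p.Monic := charpoly_monic _
  have hfin : {r : ℝ | ∃ μ : ℂ, p.IsRoot μ ∧ r = ‖μ‖}.Finite := by
    convert (finite_setOfPred_isRoot hp.ne_zero).image (‖·‖)
    simp only [Set.image, Set.mem_ofPred_eq, eq_comm]
  obtain ⟨μ, hμ⟩ := Complex.exists_root (f := p) (by
    rwa [degree_eq_natDegree hp.ne_zero, charpoly_natDegree_eq_dim, Fintype.card_fin,
      Nat.cast_pos])
  exact Set.Nonempty.csSup_mem (s := {r : ℝ | ∃ μ : ℂ, p.IsRoot μ ∧ r = ‖μ‖})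
    ⟨‖μ‖, μ, hμ, rfl⟩ hfin

theorem specRad_lt_of_mulVec_le {N : ℕ} {B : Matrix (Fin N) (Fin N) ℝ} (hB : ∀ i j, 0 < B i j)
    {v : Fin N → ℝ} (hv : ∀ i, 0 < v i) {ρ : ℝ} (hρ : 0 ≤ ρ) (hle : ∀ j, (B *ᵥ v) j ≤ ρ * v j)
    {i : Fin N} (hlt : (B *ᵥ v) i < ρ * v i) : specRad B < ρ := by
  obtain ⟨μ, hroot, hμ⟩ := exists_isRoot_specRad_eq_norm i.pos B
  obtain ⟨x, hx, hBx⟩ := exists_mulVec_eq_smul_of_isRoot_charpoly hroot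
  have hBBx : (B * B).map Complex.ofReal *ᵥ x = μ ^ 2 • x := by
    rw [show (B * B).map Complex.ofReal = B.map Complex.ofReal * B.map Complex.ofReal from
      Matrix.map_mul (f := Complex.ofRealHom)]
    rw [← mulVec_mulVec, hBx, mulVec_smul, hBx, smul_smul, sq]
  have hBB : ∀ j k, 0 ≤ (B * B) j k := fun j k => by
    rw [mul_apply]; exact Finset.sum_nonneg fun l _ => mul_nonneg (hB j l).le (hB l k).le
  have hlt2 : ‖μ ^ 2‖ < ρ ^ 2 := norm_lt_of_mulVec_lt hBB hv
    (by simpa only [← mulVec_mulVec] using mulVec_mulVec_lt_of_mulVec_le hB hρ hle hlt) hx hBBx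
  rw [hμ]
  exact lt_of_pow_lt_pow_left₀ 2 hρ (by rwa [norm_pow] at hlt2)

theorem IsIRU.updateRow_mem {N M : ℕ} {S : Set (Matrix (Fin N) (Fin M) ℝ)} (hS : IsIRU S)
    {A B : Matrix (Fin N) (Fin M) ℝ} (hA : A ∈ S) (hB : B ∈ S) (i : Fin N) :
    A.updateRow i (B i) ∈ S := by
  obtain ⟨rows, rfl⟩ := hS
  intro j
  obtain rfl | hj := eq_or_ne j i
  · simpa using hB j
  · simpa [updateRow_ne hj] using hA j

theorem stmt_6_general {N : ℕ} (S : Set (Matrix (Fin N) (Fin N) ℝ)) (hS : IsIRU S)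
    (hpos : ∀ A ∈ S, ∀ i j, 0 < A i j)
    (A₀ : Matrix (Fin N) (Fin N) ℝ) (hA₀ : A₀ ∈ S)
    (hmin : ∀ A ∈ S, specRad A₀ ≤ specRad A)
    (v : Fin N → ℝ) (hv : ∀ i, 0 < v i)
    (heig : A₀.mulVec v = specRad A₀ • v) :
    ∀ A ∈ S, specRad A₀ • v ≤ A.mulVec v := by
  intro A hA
  by_contra hcon
  obtain ⟨i, hi⟩ : ∃ i, (A *ᵥ v) i < specRad A₀ * v i := by simpa [Pi.le_def] using hcon
  set B := A₀.updateRow i (A i)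
  have hBS : B ∈ S := hS.updateRow_mem hA₀ hA i
  have hBv : B *ᵥ v = Function.update (specRad A₀ • v) i ((A *ᵥ v) i) := by
    rw [updateRow_mulVec, heig]; rfl
  have hle : ∀ j, (B *ᵥ v) j ≤ specRad A₀ * v j := by
    intro j
    obtain rfl | hj := eq_or_ne j i
    · simpa [hBv] using hi.le
    · simp [hBv, hj]
  have hlt : specRad B < specRad A₀ :=
    specRad_lt_of_mulVec_le (hpos B hBS) hv (specRad_nonneg A₀) hle (i := i) (by simpa [hBv])
  exact hlt.not_ge (hmin B hBS)

theorem stmt_6 {N : ℕ} (S : Set (Matrix (Fin N) (Fin N) ℝ)) (hS : IsIRU S)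
    (hcomp : IsCompact S) (hpos : ∀ A ∈ S, ∀ i j, 0 < A i j)
    (A₀ : Matrix (Fin N) (Fin N) ℝ) (hA₀ : A₀ ∈ S)
    (hmin : ∀ A ∈ S, specRad A₀ ≤ specRad A)
    (v : Fin N → ℝ) (hv : ∀ i, 0 < v i)
    (heig : A₀.mulVec v = specRad A₀ • v) :
    ∀ A ∈ S, specRad A₀ • v ≤ A.mulVec v :=
  stmt_6_general S hS hpos A₀ hA₀ hmin v hv heig
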